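/- arXiv:1507.06276 — 2 statements merged into one kernel-verified Lean document; each statement's English description precedes it below -/
import Mathlib

section
/- Let (H,R) be a braided bialgebra over a field k and set C = R·R_21 ∈ H⊗H. Then in H⊗H⊗H one has (id⊗Δ)(C) = C_{12}·R_{23}·C_{13}·R_{32}·(R_{23}·R_{32})^{-1}, where, writing C = Σ c_i⊗d_i, one sets C_{12} = Σ c_i⊗d_i⊗1, C_{13} = Σ c_i⊗1⊗d_i, R_{23} = 1⊗R, and R_{32} = 1⊗R_21. -/
/- Braided bialgebras: basic tensor-leg maps and the universal R-matrix axioms. -/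

open scoped TensorProduct

noncomputable section

variable (k H : Type*) [Field k] [Ring H] [Bialgebra k H]

/-- The flip `a ⊗ b ↦ b ⊗ a` on `H ⊗[k] H`, as an algebra homomorphism. -/
def tflip : H ⊗[k] H →ₐ[k] H ⊗[k] H := (Algebra.TensorProduct.comm k H H).toAlgHom

/-- `s ⊗ t ↦ s ⊗ t ⊗ 1 : H ⊗ H → H ⊗ H ⊗ H`. -/
def leg12 : H ⊗[k] H →ₐ[k] H ⊗[k] (H ⊗[k] H) :=
  Algebra.TensorProduct.map (AlgHom.id k H) Algebra.TensorProduct.includeLeft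

/-- `s ⊗ t ↦ s ⊗ 1 ⊗ t : H ⊗ H → H ⊗ H ⊗ H`. -/
def leg13 : H ⊗[k] H →ₐ[k] H ⊗[k] (H ⊗[k] H) :=
  Algebra.TensorProduct.map (AlgHom.id k H) Algebra.TensorProduct.includeRight

/-- `s ⊗ t ↦ 1 ⊗ s ⊗ t : H ⊗ H → H ⊗ H ⊗ H`. -/
def leg23 : H ⊗[k] H →ₐ[k] H ⊗[k] (H ⊗[k] H) :=
  Algebra.TensorProduct.includeRight

/-- `Δ ⊗ id : H ⊗ H → H ⊗ H ⊗ H`. -/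
def comulLeft : H ⊗[k] H →ₐ[k] H ⊗[k] (H ⊗[k] H) :=
  (Algebra.TensorProduct.assoc k k k H H H).toAlgHom.comp
    (Algebra.TensorProduct.map (Bialgebra.comulAlgHom k H) (AlgHom.id k H))

/-- `id ⊗ Δ : H ⊗ H → H ⊗ H ⊗ H`. -/
def comulRight : H ⊗[k] H →ₐ[k] H ⊗[k] (H ⊗[k] H) :=
  Algebra.TensorProduct.map (AlgHom.id k H) (Bialgebra.comulAlgHom k H)

/-- `(H, R)` is a braided bialgebra with `R⁻¹ = Rinv`:  `R` is an invertible element of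
`H ⊗ H` satisfying `Δ(x) · R = R · Δ^op(x)` for all `x` and the two hexagon identities
`(Δ ⊗ id)(R) = R₂₃ · R₁₃` and `(id ⊗ Δ)(R) = R₁₂ · R₁₃`. -/
def IsUniversalRMatrix (R Rinv : H ⊗[k] H) : Prop :=
  R * Rinv = 1 ∧ Rinv * R = 1 ∧
  (∀ x : H, Bialgebra.comulAlgHom k H x * R = R * tflip k H (Bialgebra.comulAlgHom k H x)) ∧
  comulLeft k H R = leg23 k H R * leg13 k H R ∧
  comulRight k H R = leg12 k H R * leg13 k H R

/-!
Write `C = R R₂₁`. The hexagon identities give `(id ⊗ Δ)(R) = R₁₂ R₁₃` and, after cyclically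
permuting the legs of `(Δ ⊗ id)(R) = R₂₃ R₁₃`, `(id ⊗ Δ)(R₂₁) = R₃₁ R₂₁`; hence
`(id ⊗ Δ)(C) = R₁₂ C₁₃ R₂₁`. Since `R` intertwines `Δ` and `Δ^op`, `C` commutes with `Δ(H)`, so
`C₁₃` commutes with every element obtained from some `(id ⊗ Δ)(z)` by swapping the first two
legs, in particular with `R₂₁ R₂₃`. Therefore
`C₁₂ R₂₃ C₁₃ R₃₂ = R₁₂ (R₂₁ R₂₃ C₁₃) R₃₂ = R₁₂ C₁₃ R₂₁ (R₂₃ R₃₂)`.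
-/

/-- `a ⊗ b ⊗ c ↦ c ⊗ a ⊗ b`. -/
def cycleLegs : H ⊗[k] (H ⊗[k] H) →ₐ[k] H ⊗[k] (H ⊗[k] H) :=
  (Algebra.TensorProduct.comm k (H ⊗[k] H) H).toAlgHom.comp
    (Algebra.TensorProduct.assoc k k k H H H).symm.toAlgHom

local notation "swap12" => Algebra.TensorProduct.leftComm k H H H

lemma tflip_tflip (z : H ⊗[k] H) : tflip k H (tflip k H z) = z := by
  induction z using TensorProduct.induction_on with
  | zero => simp
  | tmul a b => rfl
  | add x y hx hy => simp only [map_add, hx, hy]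

lemma cycleLegs_comulLeft (z : H ⊗[k] H) :
    cycleLegs k H (comulLeft k H z) = comulRight k H (tflip k H z) := by
  induction z using TensorProduct.induction_on with
  | zero => simp
  | tmul a b => simp [cycleLegs, comulLeft, comulRight, tflip]
  | add x y hx hy => simp only [map_add, hx, hy]

lemma cycleLegs_leg23 (z : H ⊗[k] H) :
    cycleLegs k H (leg23 k H z) = leg13 k H (tflip k H z) := by
  induction z using TensorProduct.induction_on with
  | zero => simp
  | tmul a b => rfl
  | add x y hx hy => simp only [map_add, hx, hy]

lemma cycleLegs_leg13 (z : H ⊗[k] H) :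
    cycleLegs k H (leg13 k H z) = leg12 k H (tflip k H z) := by
  induction z using TensorProduct.induction_on with
  | zero => simp
  | tmul a b => rfl
  | add x y hx hy => simp only [map_add, hx, hy]

lemma leftComm_leg12 (z : H ⊗[k] H) : swap12 (leg12 k H z) = leg12 k H (tflip k H z) := by
  induction z using TensorProduct.induction_on with
  | zero => simp
  | tmul a b => rfl
  | add x y hx hy => simp only [map_add, hx, hy]

lemma leftComm_leg13 (z : H ⊗[k] H) : swap12 (leg13 k H z) = leg23 k H z := by
  induction z using TensorProduct.induction_on with
  | zero => simp
  | tmul a b => rfl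
  | add x y hx hy => simp only [map_add, hx, hy]

lemma leftComm_tmul_eq_mul_leg13 (a : H) (w : H ⊗[k] H) :
    swap12 (a ⊗ₜ[k] w) = ((1 : H) ⊗ₜ[k] (a ⊗ₜ[k] (1 : H))) * leg13 k H w := by
  induction w using TensorProduct.induction_on with
  | zero => simp
  | tmul u v => simp [leg13]
  | add x y hx hy => simp only [TensorProduct.tmul_add, map_add, hx, hy, mul_add]

lemma commute_leg13_tmul_one (a : H) (w : H ⊗[k] H) :
    Commute (leg13 k H w) ((1 : H) ⊗ₜ[k] (a ⊗ₜ[k] (1 : H))) := by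
  induction w using TensorProduct.induction_on with
  | zero => simp
  | tmul u v => simp [Commute, SemiconjBy, leg13]
  | add x y hx hy => simpa only [map_add] using hx.add_left hy

lemma commute_leg13_leftComm_comulRight {C : H ⊗[k] H}
    (hC : ∀ x : H, Commute (Bialgebra.comulAlgHom k H x) C) (z : H ⊗[k] H) :
    Commute (leg13 k H C) (swap12 (comulRight k H z)) := by
  induction z using TensorProduct.induction_on with
  | zero => simp
  | tmul a b =>
    rw [show comulRight k H (a ⊗ₜ[k] b) = a ⊗ₜ[k] Bialgebra.comulAlgHom k H b from rfl,
      leftComm_tmul_eq_mul_leg13]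
    exact (commute_leg13_tmul_one k H a C).mul_right
      ((hC b).symm.map (leg13 k H))
  | add x y hx hy => simpa only [map_add] using hx.add_right hy

lemma commute_comul_mul_tflip {R : H ⊗[k] H}
    (hR : ∀ x : H, Bialgebra.comulAlgHom k H x * R = R * tflip k H (Bialgebra.comulAlgHom k H x))
    (x : H) : Commute (Bialgebra.comulAlgHom k H x) (R * tflip k H R) := by
  set Δx := Bialgebra.comulAlgHom k H x
  calc Δx * (R * tflip k H R) = R * (tflip k H Δx * tflip k H R) := by
        rw [← mul_assoc, hR, mul_assoc]
    _ = R * tflip k H (Δx * R) := by rw [map_mul]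
    _ = R * tflip k H R * Δx := by rw [hR, map_mul, tflip_tflip, mul_assoc]

lemma comulRight_tflip {R : H ⊗[k] H} (hR : comulLeft k H R = leg23 k H R * leg13 k H R) :
    comulRight k H (tflip k H R) = leg13 k H (tflip k H R) * leg12 k H (tflip k H R) := by
  simpa only [cycleLegs_comulLeft, map_mul, cycleLegs_leg23, cycleLegs_leg13]
    using congrArg (cycleLegs k H) hR

lemma leftComm_comulRight {R : H ⊗[k] H} (hR : comulRight k H R = leg12 k H R * leg13 k H R) :
    swap12 (comulRight k H R) = leg12 k H (tflip k H R) * leg23 k H R := by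
  rw [hR, map_mul, leftComm_leg12, leftComm_leg13]

lemma comulRight_mul_tflip {R : H ⊗[k] H}
    (hLeft : comulLeft k H R = leg23 k H R * leg13 k H R)
    (hRight : comulRight k H R = leg12 k H R * leg13 k H R) :
    comulRight k H (R * tflip k H R)
      = leg12 k H R * leg13 k H (R * tflip k H R) * leg12 k H (tflip k H R) := by
  rw [map_mul, hRight, comulRight_tflip k H hLeft, map_mul (leg13 k H)]
  simp only [mul_assoc]

theorem id_comul_of_R_R21
    (R Rinv : H ⊗[k] H) (hR : IsUniversalRMatrix k H R Rinv)
    (Q : H ⊗[k] (H ⊗[k] H))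
    (hQ : leg23 k H R * leg23 k H (tflip k H R) * Q = 1) :
    comulRight k H (R * tflip k H R)
      = leg12 k H (R * tflip k H R) * leg23 k H R *
          leg13 k H (R * tflip k H R) * leg23 k H (tflip k H R) * Q := by
  obtain ⟨-, -, hcomm, hLeft, hRight⟩ := hR
  have hC : Commute (leg13 k H (R * tflip k H R)) (leg12 k H (tflip k H R) * leg23 k H R) :=
    leftComm_comulRight k H hRight ▸
      commute_leg13_leftComm_comulRight k H (commute_comul_mul_tflip k H hcomm) R
  calc comulRight k H (R * tflip k H R)
      = leg12 k H R * leg13 k H (R * tflip k H R) * leg12 k H (tflip k H R) *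
          (leg23 k H R * leg23 k H (tflip k H R) * Q) := by
        rw [hQ, mul_one, comulRight_mul_tflip k H hLeft hRight]
    _ = leg12 k H R * ((leg12 k H (tflip k H R) * leg23 k H R) * leg13 k H (R * tflip k H R)) *
          leg23 k H (tflip k H R) * Q := by
        rw [← hC.eq]; simp only [mul_assoc]
    _ = _ := by rw [map_mul (leg12 k H)]; simp only [mul_assoc]
end
end

section
/- Let (H,R) be a braided bialgebra over a field k, let θ ∈ H be an invertible central element satisfying Δ(θ) = (R·R_21)^{-1}·(θ⊗θ), and let f : H → k be a character. Then the element K = (f⊗id)((1⊗θ^{-1})·R·R_21) ∈ H satisfies Δ(K) = (K⊗1)·R·(1⊗K)·R_21 in H⊗H. -/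
/- Braided bialgebras: basic tensor-leg maps and the universal R-matrix axioms. -/

open scoped TensorProduct

noncomputable section

variable (k H : Type*) [Field k] [Ring H] [Bialgebra k H]

/-- `ψ ⊗ id : H ⊗ H → H`, `a ⊗ b ↦ ψ(a) • b`. -/
def dualTensorId (ψ : H →ₗ[k] k) : H ⊗[k] H →ₗ[k] H :=
  (TensorProduct.lid k H).toLinearMap.comp (TensorProduct.map ψ LinearMap.id)

/-! Since `f` is a character, `f ⊗ id ⊗ id` is an algebra map sending `(id ⊗ Δ)(u)` to `Δ(K)`,
where `u = (1 ⊗ θ⁻¹) R R₂₁`, and sending `u₁₂`, `R₂₃`, `u₁₃`, `R₃₂` to `K ⊗ 1`, `R`, `1 ⊗ K`,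
`R₂₁`. So it suffices to show `(id ⊗ Δ)(u) = u₁₂ R₂₃ u₁₃ R₃₂` in `H ⊗ H ⊗ H`. The hexagon axioms
and `Δ(θ⁻¹) = (θ⁻¹ ⊗ θ⁻¹) R R₂₁` give `(id ⊗ Δ)(u) = θ⁻¹₂ θ⁻¹₃ R₂₃ R₃₂ R₁₂ R₁₃ R₃₁ R₂₁`, and the
Yang–Baxter equation `R₁₂ R₁₃ R₂₃ = R₂₃ R₁₃ R₁₂`, together with three of its images under
permutations of the legs, moves the factors into place. -/

def tflip23 : H ⊗[k] (H ⊗[k] H) →ₐ[k] H ⊗[k] (H ⊗[k] H) :=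
  Algebra.TensorProduct.map (AlgHom.id k H) (tflip k H)

def tflip12 : H ⊗[k] (H ⊗[k] H) →ₐ[k] H ⊗[k] (H ⊗[k] H) :=
  (Algebra.TensorProduct.leftComm k H H H).toAlgHom

def charTensorId (f : H →ₐ[k] k) : H ⊗[k] (H ⊗[k] H) →ₐ[k] H ⊗[k] H :=
  (Algebra.TensorProduct.lid k (H ⊗[k] H)).toAlgHom.comp
    (Algebra.TensorProduct.map f (AlgHom.id k (H ⊗[k] H)))

section

variable {k H}

theorem algHom_apply_eq_of_tmul {A : Type*} [Semiring A] [Algebra k A]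
    (g h : H ⊗[k] H →ₐ[k] A) (hgh : ∀ a b : H, g (a ⊗ₜ b) = h (a ⊗ₜ b)) (x : H ⊗[k] H) :
    g x = h x := by
  rw [Algebra.TensorProduct.ext' hgh]

@[simp] theorem tflip_tmul (a b : H) : tflip k H (a ⊗ₜ[k] b) = b ⊗ₜ[k] a := rfl

@[simp] theorem tflip12_tmul (a b c : H) :
    tflip12 k H (a ⊗ₜ[k] (b ⊗ₜ[k] c)) = b ⊗ₜ[k] (a ⊗ₜ[k] c) := rfl

@[simp] theorem tflip23_tmul (a b c : H) :
    tflip23 k H (a ⊗ₜ[k] (b ⊗ₜ[k] c)) = a ⊗ₜ[k] (c ⊗ₜ[k] b) := rfl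

@[simp] theorem leg12_tmul (a b : H) :
    leg12 k H (a ⊗ₜ[k] b) = a ⊗ₜ[k] (b ⊗ₜ[k] (1 : H)) := rfl

@[simp] theorem leg13_tmul (a b : H) :
    leg13 k H (a ⊗ₜ[k] b) = a ⊗ₜ[k] ((1 : H) ⊗ₜ[k] b) := rfl

@[simp] theorem leg23_apply (x : H ⊗[k] H) : leg23 k H x = (1 : H) ⊗ₜ[k] x := rfl

@[simp] theorem comulRight_tmul (a b : H) :
    comulRight k H (a ⊗ₜ[k] b) = a ⊗ₜ[k] Bialgebra.comulAlgHom k H b := rfl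

theorem tflip23_leg12 (x : H ⊗[k] H) : tflip23 k H (leg12 k H x) = leg13 k H x :=
  algHom_apply_eq_of_tmul ((tflip23 k H).comp (leg12 k H)) (leg13 k H) (fun _ _ => rfl) x

theorem tflip23_leg13 (x : H ⊗[k] H) : tflip23 k H (leg13 k H x) = leg12 k H x :=
  algHom_apply_eq_of_tmul ((tflip23 k H).comp (leg13 k H)) (leg12 k H) (fun _ _ => rfl) x

theorem tflip23_leg23 (x : H ⊗[k] H) : tflip23 k H (leg23 k H x) = leg23 k H (tflip k H x) :=
  algHom_apply_eq_of_tmul ((tflip23 k H).comp (leg23 k H)) ((leg23 k H).comp (tflip k H))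
    (fun _ _ => rfl) x

theorem tflip12_leg12 (x : H ⊗[k] H) : tflip12 k H (leg12 k H x) = leg12 k H (tflip k H x) :=
  algHom_apply_eq_of_tmul ((tflip12 k H).comp (leg12 k H)) ((leg12 k H).comp (tflip k H))
    (fun _ _ => rfl) x

theorem tflip12_leg13 (x : H ⊗[k] H) : tflip12 k H (leg13 k H x) = leg23 k H x :=
  algHom_apply_eq_of_tmul ((tflip12 k H).comp (leg13 k H)) (leg23 k H) (fun _ _ => rfl) x

theorem tflip12_leg23 (x : H ⊗[k] H) : tflip12 k H (leg23 k H x) = leg13 k H x :=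
  algHom_apply_eq_of_tmul ((tflip12 k H).comp (leg23 k H)) (leg13 k H) (fun _ _ => rfl) x

theorem comulLeft_tmul (a b : H) :
    comulLeft k H (a ⊗ₜ[k] b)
      = leg12 k H (Bialgebra.comulAlgHom k H a) * ((1 : H) ⊗ₜ[k] ((1 : H) ⊗ₜ[k] b)) := by
  change Algebra.TensorProduct.assoc k k k H H H (Bialgebra.comulAlgHom k H a ⊗ₜ[k] b) = _
  induction Bialgebra.comulAlgHom k H a using TensorProduct.induction_on with
  | zero => simp
  | tmul c d => simp
  | add x y hx hy => simp only [TensorProduct.add_tmul, map_add, add_mul, hx, hy]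

theorem leg12_commute_one_tmul_one_tmul (x : H ⊗[k] H) (b : H) :
    Commute (leg12 k H x) ((1 : H) ⊗ₜ[k] ((1 : H) ⊗ₜ[k] b)) := by
  induction x using TensorProduct.induction_on with
  | zero => simp
  | tmul a c => simp [Commute, SemiconjBy]
  | add x y hx hy => rw [map_add]; exact hx.add_left hy

theorem tflip12_tflip23_comulLeft (x : H ⊗[k] H) :
    tflip12 k H (tflip23 k H (comulLeft k H x)) = comulRight k H (tflip k H x) :=
  algHom_apply_eq_of_tmul (((tflip12 k H).comp (tflip23 k H)).comp (comulLeft k H))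
    ((comulRight k H).comp (tflip k H))
    (fun a b => by
      simp [comulLeft_tmul, tflip23_leg12, tflip12_leg13, ← Algebra.TensorProduct.one_def]) x

theorem commute_tmul_of_forall_commute {A B : Type*} [Ring A] [Ring B] [Algebra k A]
    [Algebra k B] {a : A} {b : B} (ha : ∀ x, Commute a x) (hb : ∀ y, Commute b y)
    (w : A ⊗[k] B) : Commute (a ⊗ₜ[k] b) w := by
  induction w using TensorProduct.induction_on with
  | zero => exact Commute.zero_right _
  | tmul x y => simp [Commute, SemiconjBy, (ha x).eq, (hb y).eq]
  | add x y hx hy => exact hx.add_right hy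

theorem comulLeft_mul_leg12 {R : H ⊗[k] H}
    (hΔR : ∀ x : H, Bialgebra.comulAlgHom k H x * R = R * tflip k H (Bialgebra.comulAlgHom k H x))
    (x : H ⊗[k] H) :
    comulLeft k H x * leg12 k H R = leg12 k H R * tflip12 k H (comulLeft k H x) := by
  induction x using TensorProduct.induction_on with
  | zero => simp
  | tmul a b =>
    have hb : tflip12 k H ((1 : H) ⊗ₜ[k] ((1 : H) ⊗ₜ[k] b)) = (1 : H) ⊗ₜ[k] ((1 : H) ⊗ₜ[k] b) :=
      rfl
    rw [comulLeft_tmul, map_mul, tflip12_leg12, hb, mul_assoc,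
      ← (leg12_commute_one_tmul_one_tmul R b).eq, ← mul_assoc, ← map_mul, hΔR, map_mul, mul_assoc]
  | add x y hx hy => simp only [map_add, add_mul, mul_add, hx, hy]

namespace IsUniversalRMatrix

variable {R Rinv : H ⊗[k] H}

theorem inv_mul (hR : IsUniversalRMatrix k H R Rinv) : Rinv * R = 1 := hR.2.1

theorem comul_mul (hR : IsUniversalRMatrix k H R Rinv) (x : H) :
    Bialgebra.comulAlgHom k H x * R = R * tflip k H (Bialgebra.comulAlgHom k H x) := hR.2.2.1 x

theorem comulLeft_eq (hR : IsUniversalRMatrix k H R Rinv) :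
    comulLeft k H R = leg23 k H R * leg13 k H R := hR.2.2.2.1

theorem comulRight_eq (hR : IsUniversalRMatrix k H R Rinv) :
    comulRight k H R = leg12 k H R * leg13 k H R := hR.2.2.2.2

theorem yangBaxter (hR : IsUniversalRMatrix k H R Rinv) :
    leg23 k H R * leg13 k H R * leg12 k H R = leg12 k H R * (leg13 k H R * leg23 k H R) := by
  have h := comulLeft_mul_leg12 hR.comul_mul R
  rwa [hR.comulLeft_eq, map_mul, tflip12_leg23, tflip12_leg13] at h

theorem comulRight_tflip (hR : IsUniversalRMatrix k H R Rinv) :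
    comulRight k H (tflip k H R) = leg13 k H (tflip k H R) * leg12 k H (tflip k H R) := by
  rw [← tflip12_tflip23_comulLeft, hR.comulLeft_eq, map_mul, map_mul, tflip23_leg23, tflip23_leg13,
    tflip12_leg23, tflip12_leg12]

end IsUniversalRMatrix

theorem comulAlgHom_inverse_eq {R Rinv : H ⊗[k] H} {θ θinv : H} (hRinv : Rinv * R = 1)
    (hθ : θ * θinv = 1) (hθ' : θinv * θ = 1)
    (hΔθ : Bialgebra.comulAlgHom k H θ = (tflip k H Rinv * Rinv) * (θ ⊗ₜ[k] θ)) :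
    Bialgebra.comulAlgHom k H θinv = (θinv ⊗ₜ[k] θinv) * (R * tflip k H R) := by
  refine left_inv_eq_right_inv (a := Bialgebra.comulAlgHom k H θ) ?_ ?_
  · rw [← map_mul, hθ', map_one]
  · rw [hΔθ, mul_assoc, ← mul_assoc (θ ⊗ₜ[k] θ), Algebra.TensorProduct.tmul_mul_tmul, hθ,
      ← Algebra.TensorProduct.one_def, one_mul, ← mul_assoc, mul_assoc (tflip k H Rinv), hRinv,
      mul_one, ← map_mul, hRinv, map_one]

theorem mul_rearrange_of_yangBaxter {M : Type*} [Monoid M] {a a' b b' c c' : M}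
    (h₁ : c * b * a = a * (b * c)) (h₂ : b * c * a' = a' * (c * b))
    (h₃ : c' * a * b = b * (a * c')) (h₄ : a' * b' * c' = c' * (b' * a')) :
    c * (c' * (a * (b * (b' * a')))) = a * (a' * (c * (b * (b' * c')))) :=
  calc c * (c' * (a * (b * (b' * a')))) = c * (c' * a * b) * (b' * a') := by
        simp only [mul_assoc]
    _ = c * b * a * (c' * (b' * a')) := by rw [h₃]; simp only [mul_assoc]
    _ = a * (b * c * a') * (b' * c') := by rw [← h₄, h₁]; simp only [mul_assoc]
    _ = a * (a' * (c * (b * (b' * c')))) := by rw [h₂]; simp only [mul_assoc]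

theorem IsUniversalRMatrix.comulRight_twist {R Rinv u : H ⊗[k] H} {θ θinv : H}
    (hR : IsUniversalRMatrix k H R Rinv) (hθ : θ * θinv = 1) (hθ' : θinv * θ = 1)
    (hcentral : ∀ x : H, θ * x = x * θ)
    (hΔθ : Bialgebra.comulAlgHom k H θ = (tflip k H Rinv * Rinv) * (θ ⊗ₜ[k] θ))
    (hu : u = ((1 : H) ⊗ₜ[k] θinv) * R * tflip k H R) :
    comulRight k H u
      = leg12 k H u * (leg23 k H R * (leg13 k H u * leg23 k H (tflip k H R))) := by
  let θu : Hˣ := ⟨θ, θinv, hθ, hθ'⟩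
  have hθinv (x : H) : Commute θinv x := Commute.units_inv_left (u := θu) (hcentral x)
  have hQ (w : H ⊗[k] (H ⊗[k] H)) : Commute ((1 : H) ⊗ₜ[k] ((1 : H) ⊗ₜ[k] θinv)) w :=
    commute_tmul_of_forall_commute Commute.one_left
      (fun y => commute_tmul_of_forall_commute Commute.one_left hθinv y) w
  have h₁ := hR.yangBaxter
  have h₂ := congrArg (tflip12 k H) h₁
  have h₃ := congrArg (tflip23 k H) h₁
  have h₄ := congrArg (tflip12 k H) (congrArg (tflip23 k H) h₂)
  simp only [map_mul, tflip12_leg12, tflip12_leg13, tflip12_leg23, tflip23_leg12, tflip23_leg13,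
    tflip23_leg23] at h₂ h₃ h₄
  have hθinv_split : (1 : H) ⊗ₜ[k] (θinv ⊗ₜ[k] θinv)
      = (1 : H) ⊗ₜ[k] (θinv ⊗ₜ[k] (1 : H)) * (1 : H) ⊗ₜ[k] ((1 : H) ⊗ₜ[k] θinv) := by
    simp [Algebra.TensorProduct.tmul_mul_tmul]
  calc comulRight k H u
      = (1 : H) ⊗ₜ[k] (θinv ⊗ₜ[k] (1 : H)) * (1 : H) ⊗ₜ[k] ((1 : H) ⊗ₜ[k] θinv) *
        (leg23 k H R * (leg23 k H (tflip k H R) * (leg12 k H R * (leg13 k H R *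
          (leg13 k H (tflip k H R) * leg12 k H (tflip k H R)))))) := by
        rw [hu, map_mul, map_mul, comulRight_tmul, comulAlgHom_inverse_eq hR.inv_mul hθ hθ' hΔθ, hR.comulRight_eq,
          hR.comulRight_tflip, ← leg23_apply, map_mul, map_mul, leg23_apply, hθinv_split]
        simp only [mul_assoc]
    _ = (1 : H) ⊗ₜ[k] (θinv ⊗ₜ[k] (1 : H)) * (1 : H) ⊗ₜ[k] ((1 : H) ⊗ₜ[k] θinv) *
        (leg12 k H R * (leg12 k H (tflip k H R) * (leg23 k H R * (leg13 k H R *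
          (leg13 k H (tflip k H R) * leg23 k H (tflip k H R)))))) := by
        rw [mul_rearrange_of_yangBaxter h₁ h₂ h₃ h₄]
    _ = leg12 k H u * (leg23 k H R * (leg13 k H u * leg23 k H (tflip k H R))) := by
        simp only [hu, map_mul, leg12_tmul, leg13_tmul, mul_assoc]
        rw [(hQ _).left_comm, (hQ _).left_comm, (hQ _).left_comm]

section CharTensorId

variable (f : H →ₐ[k] k)

@[simp] theorem charTensorId_tmul (a : H) (m : H ⊗[k] H) :
    charTensorId k H f (a ⊗ₜ[k] m) = f a • m := by
  simp [charTensorId]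

@[simp] theorem dualTensorId_tmul (ψ : H →ₗ[k] k) (a b : H) :
    dualTensorId k H ψ (a ⊗ₜ[k] b) = ψ a • b := by
  simp [dualTensorId]

theorem charTensorId_leg12 (x : H ⊗[k] H) :
    charTensorId k H f (leg12 k H x) = dualTensorId k H f.toLinearMap x ⊗ₜ[k] (1 : H) := by
  induction x using TensorProduct.induction_on with
  | zero => simp
  | tmul a b => simp [TensorProduct.smul_tmul']
  | add x y hx hy => simp only [map_add, hx, hy, TensorProduct.add_tmul]

theorem charTensorId_leg13 (x : H ⊗[k] H) :
    charTensorId k H f (leg13 k H x) = (1 : H) ⊗ₜ[k] dualTensorId k H f.toLinearMap x := by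
  induction x using TensorProduct.induction_on with
  | zero => simp
  | tmul a b => simp [TensorProduct.tmul_smul]
  | add x y hx hy => simp only [map_add, hx, hy, TensorProduct.tmul_add]

theorem charTensorId_leg23 (x : H ⊗[k] H) : charTensorId k H f (leg23 k H x) = x := by
  simp

theorem charTensorId_comulRight (x : H ⊗[k] H) :
    charTensorId k H f (comulRight k H x)
      = Bialgebra.comulAlgHom k H (dualTensorId k H f.toLinearMap x) := by
  induction x using TensorProduct.induction_on with
  | zero => simp
  | tmul a b => simp
  | add x y hx hy => simp only [map_add, hx, hy]

end CharTensorId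

end

/-- in a braided bialgebra `(H, R)` with an invertible central element `θ`
satisfying `Δ(θ) = (R · R₂₁)⁻¹ · (θ ⊗ θ)` and a character `f : H → k`, the element
`K = (f ⊗ id)((1 ⊗ θ⁻¹) · R · R₂₁)` satisfies
`Δ(K) = (K ⊗ 1) · R · (1 ⊗ K) · R₂₁` in `H ⊗ H`. -/
theorem comul_of_K_dkm
    (R Rinv : H ⊗[k] H) (hR : IsUniversalRMatrix k H R Rinv)
    (θ θinv : H) (hθ : θ * θinv = 1) (hθ' : θinv * θ = 1)
    (hcentral : ∀ x : H, θ * x = x * θ)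
    (hΔθ : Bialgebra.comulAlgHom k H θ
      = (tflip k H Rinv * Rinv) * (θ ⊗ₜ[k] θ))
    (f : H →ₐ[k] k)
    (K : H)
    (hKdef : K = dualTensorId k H f.toLinearMap (((1 : H) ⊗ₜ[k] θinv) * R * tflip k H R)) :
    Bialgebra.comulAlgHom k H K
      = (K ⊗ₜ[k] (1 : H)) * R * ((1 : H) ⊗ₜ[k] K) * tflip k H R := by
  rw [hKdef, ← charTensorId_comulRight f, hR.comulRight_twist hθ hθ' hcentral hΔθ rfl]
  simp only [map_mul (charTensorId k H f), charTensorId_leg12, charTensorId_leg13,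
    charTensorId_leg23, mul_assoc]
end
end
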